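/- arXiv:math/9901145 — 4 statements merged into one kernel-verified Lean document; each statement's English description precedes it below -/
import Mathlib

section
/- With notation as above, the bracket algebra (B, [·,·]) is a Lie algebra if and only if the induced alternating 3-form J on L̄ (obtained from the Jacobiator J̄ via the identification π^k B ≅ L̄) is identically zero. -/
open Pointwise

/-- `Rmod R π m` is the quotient ring `R/π^m R`. -/
abbrev Rmod (R : Type) [CommRing R] (π : R) (m : ℕ) : Type :=
  R ⧸ Ideal.span {π ^ m}

section Setup

variable (R : Type) [CommRing R] (π : R) (k : ℕ)
variable (B : Type) [AddCommGroup B] [Module (Rmod R π (k + 1)) B]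

/-- The image of `π` in `R_{k+1}`. -/
noncomputable abbrev pbar : Rmod R π (k + 1) := Ideal.Quotient.mk _ π

/-- The submodule `π^k B` of `B`. -/
noncomputable abbrev pikB : Submodule (Rmod R π (k + 1)) B :=
  (pbar R π k) ^ k • (⊤ : Submodule (Rmod R π (k + 1)) B)

/-- The submodule `π B` of `B`. -/
noncomputable abbrev piB : Submodule (Rmod R π (k + 1)) B :=
  (pbar R π k) • (⊤ : Submodule (Rmod R π (k + 1)) B)

/-- `L = B/π^k B`, the reduction of `B` to a module over `R_k`. -/
noncomputable abbrev Lred := B ⧸ pikB R π k B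

/-- `L̄ = B/πB`, the reduction of `B` to a vector space over the residue field. -/
noncomputable abbrev Lbar := B ⧸ piB R π k B

/-- The reduction map `mod : B → L = B/π^k B`. -/
noncomputable abbrev modk : B →ₗ[Rmod R π (k + 1)] Lred R π k B :=
  (pikB R π k B).mkQ

/-- The reduction map `λ : B → L̄ = B/πB`. -/
noncomputable abbrev lam : B →ₗ[Rmod R π (k + 1)] Lbar R π k B :=
  (piB R π k B).mkQ

/-- `ψ : L̄ → B`, the map sending `x mod πB` to `π^k x`; its (corestriction to `π^k B`)
is the inverse of the canonical isomorphism `χ : π^k B → L̄`. -/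
noncomputable def psi : Lbar R π k B →ₗ[Rmod R π (k + 1)] B :=
  Submodule.liftQ _ ((pbar R π k) ^ k • (LinearMap.id : B →ₗ[Rmod R π (k + 1)] B))
    (by
      intro x hx
      rw [← SetLike.mem_coe, Submodule.coe_pointwise_smul, Set.mem_smul_set] at hx
      obtain ⟨y, -, rfl⟩ := hx
      have h0 : (pbar R π k) ^ k * pbar R π k = 0 := by
        rw [← pow_succ, ← map_pow, Ideal.Quotient.eq_zero_iff_mem]
        exact Ideal.mem_span_singleton_self _
      simp only [LinearMap.mem_ker, LinearMap.smul_apply, LinearMap.id_apply, smul_smul]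
      rw [h0, zero_smul])

@[simp] theorem psi_apply (x : B) :
    psi R π k B (lam R π k B x) = ((pbar R π k) ^ k) • x := rfl

end Setup

/-! The Jacobiator of `B` is `ψ ∘ J`, so everything reduces to the injectivity of `ψ : x mod πB ↦ π^k x`.
Over `R_{k+1} = R/π^{k+1}` the annihilator of `π^k` is `(π)` because `R` is a domain, and since `B`
is free this holds coordinatewise: the `π^k`-torsion of `B` is exactly `πB`. -/

theorem exists_eq_pbar_mul_of_pbar_pow_mul_eq_zero {R : Type} [CommRing R] [IsDomain R] {π : R}
    (hπ : π ≠ 0) {k : ℕ} {a : Rmod R π (k + 1)} (h : pbar R π k ^ k * a = 0) :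
    ∃ b, a = pbar R π k * b := by
  obtain ⟨r, rfl⟩ := Ideal.Quotient.mk_surjective a
  rw [← map_pow, ← map_mul, Ideal.Quotient.eq_zero_iff_mem, Ideal.mem_span_singleton] at h
  obtain ⟨c, hc⟩ := h
  have hr : r = π * c := mul_left_cancel₀ (pow_ne_zero k hπ) (by rw [hc, pow_succ]; ring)
  exact ⟨Ideal.Quotient.mk _ c, by rw [hr, map_mul]⟩

theorem mem_piB_of_pbar_pow_smul_eq_zero {R : Type} [CommRing R] [IsDomain R] {π : R}
    (hπ : π ≠ 0) {k : ℕ} {B : Type} [AddCommGroup B] [Module (Rmod R π (k + 1)) B]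
    [Module.Free (Rmod R π (k + 1)) B] {x : B} (h : pbar R π k ^ k • x = 0) :
    x ∈ piB R π k B := by
  let b := Module.Free.chooseBasis (Rmod R π (k + 1)) B
  rw [← b.linearCombination_repr x, Finsupp.linearCombination_apply]
  refine Submodule.finsuppSum_mem _ _ _ _ fun i _ => ?_
  have hcoord : pbar R π k ^ k * b.repr x i = 0 := by
    simpa using congrArg (b.repr · i) h
  obtain ⟨d, hd⟩ := exists_eq_pbar_mul_of_pbar_pow_mul_eq_zero hπ hcoord
  rw [hd, mul_smul]
  exact Submodule.smul_mem_pointwise_smul _ _ _ trivial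

theorem psi_injective {R : Type} [CommRing R] [IsDomain R] {π : R} (hπ : π ≠ 0) {k : ℕ}
    {B : Type} [AddCommGroup B] [Module (Rmod R π (k + 1)) B] [Module.Free (Rmod R π (k + 1)) B] :
    Function.Injective (psi R π k B) := by
  refine (injective_iff_map_eq_zero _).2 fun u hu => ?_
  obtain ⟨x, rfl⟩ := Submodule.mkQ_surjective _ u
  exact (Submodule.Quotient.mk_eq_zero _).2 (mem_piB_of_pbar_pow_smul_eq_zero hπ hu)

theorem stmt_5_general (R : Type) [CommRing R] [IsDomain R]
    (π : R) (hπ : Irreducible π) (k : ℕ)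
    (B : Type) [AddCommGroup B] [Module (Rmod R π (k + 1)) B]
    [Module.Free (Rmod R π (k + 1)) B]
    (br : B →ₗ[Rmod R π (k + 1)] B →ₗ[Rmod R π (k + 1)] B)
    (J : Lbar R π k B →ₗ[Rmod R π (k + 1)] Lbar R π k B →ₗ[Rmod R π (k + 1)]
      Lbar R π k B →ₗ[Rmod R π (k + 1)] Lbar R π k B)
    (hJ : ∀ x y z : B, psi R π k B (J (lam R π k B x) (lam R π k B y) (lam R π k B z)) =
      br (br x y) z + br (br y z) x + br (br z x) y)
    :
    (∀ x y z : B, br (br x y) z + br (br y z) x + br (br z x) y = 0) ↔ J = 0 := by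
  constructor
  · intro hjac
    refine Submodule.linearMap_qext _ (LinearMap.ext fun x => Submodule.linearMap_qext _
      (LinearMap.ext fun y => Submodule.linearMap_qext _ (LinearMap.ext fun z => ?_)))
    apply psi_injective hπ.ne_zero
    simpa [hjac] using hJ x y z
  · rintro rfl x y z
    simpa using (hJ x y z).symm

/-- The bracket algebra `(B,[·,·])` (an alternating bracket lifting the Lie
algebra `L = B/π^k B`) is a Lie algebra if and only if the alternating 3-form `J` on
`L̄ = B/πB` induced from its Jacobiator `J̄` via the identification `χ : π^k B ≅ L̄`
(with inverse `ψ`) is identically zero. -/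
theorem stmt_5 (R : Type) [CommRing R] [IsDomain R] [IsDiscreteValuationRing R]
    (π : R) (hπ : Irreducible π) (k : ℕ) (hk : 1 ≤ k)
    (B : Type) [AddCommGroup B] [Module (Rmod R π (k + 1)) B]
    [Module.Free (Rmod R π (k + 1)) B] [Module.Finite (Rmod R π (k + 1)) B]
    (br : B →ₗ[Rmod R π (k + 1)] B →ₗ[Rmod R π (k + 1)] B)
    (halt : ∀ v, br v v = 0)
    (brL : Lred R π k B →ₗ[Rmod R π (k + 1)] Lred R π k B →ₗ[Rmod R π (k + 1)] Lred R π k B)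
    (hlift : ∀ x y : B, modk R π k B (br x y) = brL (modk R π k B x) (modk R π k B y))
    (hjacL : ∀ x y z : Lred R π k B, brL (brL x y) z + brL (brL y z) x + brL (brL z x) y = 0)
    (J : Lbar R π k B →ₗ[Rmod R π (k + 1)] Lbar R π k B →ₗ[Rmod R π (k + 1)]
      Lbar R π k B →ₗ[Rmod R π (k + 1)] Lbar R π k B)
    (hJ : ∀ x y z : B, psi R π k B (J (lam R π k B x) (lam R π k B y) (lam R π k B z)) =
      br (br x y) z + br (br y z) x + br (br z x) y)
    :
    (∀ x y z : B, br (br x y) z + br (br y z) x + br (br z x) y = 0) ↔ J = 0 :=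
  stmt_5_general R π hπ k B br J hJ
end

section
/- Let L̄ be a finite-dimensional Lie algebra over F_p with H³(L̄, ad) = 0. Then L̄ lifts to a p-adic Lie algebra: there exists a Lie algebra over the p-adic integers Ẑ_p, finitely generated and free as a Ẑ_p-module, whose reduction modulo p is isomorphic to L̄. (Equivalently, for every k ≥ 1 there is a compatible tower of free Lie algebras over Z/p^k Z reducing to L̄.) -/
open Pointwise

/-- A lift of an `F_p`-Lie algebra `Lb` to a p-adic Lie algebra: a finitely generated free
`ℤ_p`-module `M` with an alternating bracket satisfying the Jacobi identity, together with
a bracket-preserving surjection `M → Lb` identifying `Lb` with the reduction of `M`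
modulo `p`. -/
structure PadicLieLift (p : ℕ) [Fact p.Prime] (Lb : Type)
    [LieRing Lb] [LieAlgebra (ZMod p) Lb] where
  M : Type
  [grp : AddCommGroup M]
  [mod : Module ℤ_[p] M]
  free : Module.Free ℤ_[p] M
  fin : Module.Finite ℤ_[p] M
  br : M →ₗ[ℤ_[p]] M →ₗ[ℤ_[p]] M
  alt : ∀ x, br x x = 0
  jacobi : ∀ x y z, br (br x y) z + br (br y z) x + br (br z x) y = 0
  red : M →+ Lb
  red_surj : Function.Surjective red
  red_smul : ∀ (c : ℤ_[p]) (x : M), red (c • x) = PadicInt.toZMod c • red x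
  red_ker : ∀ x, red x = 0 ↔ x ∈ ((p : ℤ_[p]) • (⊤ : Submodule ℤ_[p] M))
  red_br : ∀ x y, red (br x y) = ⁅red x, red y⁆

namespace Stmt10

variable {p : ℕ} [Fact p.Prime] {n : ℕ}
  {Lb : Type} [LieRing Lb] [LieAlgebra (ZMod p) Lb]

local notation "R" => ℤ_[p]
local notation "MM" => (Fin n → ℤ_[p])

lemma pcast_ne_zero : (p : ℤ_[p]) ≠ 0 := by
  exact_mod_cast Nat.cast_ne_zero.mpr (Fact.out : p.Prime).ne_zero

lemma ppow_ne_zero (k : ℕ) : (p : ℤ_[p])^k ≠ 0 := pow_ne_zero _ pcast_ne_zero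

/-- toZMod kills exactly multiples of p -/
lemma toZMod_eq_zero_iff (c : ℤ_[p]) : PadicInt.toZMod c = 0 ↔ (p : ℤ_[p]) ∣ c := by
  constructor
  · intro h
    have : c ∈ RingHom.ker (PadicInt.toZMod (p := p)) := h
    rw [PadicInt.ker_toZMod, PadicInt.maximalIdeal_eq_span_p, Ideal.mem_span_singleton] at this
    exact this
  · intro h
    have : c ∈ RingHom.ker (PadicInt.toZMod (p := p)) := by
      rw [PadicInt.ker_toZMod, PadicInt.maximalIdeal_eq_span_p, Ideal.mem_span_singleton]
      exact h
    exact this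

lemma toZMod_natCast_val (a : ZMod p) :
    PadicInt.toZMod ((a.val : ℤ_[p])) = a := by
  rw [map_natCast]
  exact ZMod.natCast_rightInverse a

/-- divisibility by p^k, coordinatewise -/
def Dv (p : ℕ) [Fact p.Prime] {n : ℕ} (k : ℕ) (v : Fin n → ℤ_[p]) : Prop :=
  ∀ i, (p : ℤ_[p])^k ∣ v i

lemma Dv.add {k : ℕ} {v w : MM} (hv : Dv p k v) (hw : Dv p k w) : Dv p k (v + w) :=
  fun i => dvd_add (hv i) (hw i)

lemma Dv.neg {k : ℕ} {v : MM} (hv : Dv p k v) : Dv p k (-v) :=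
  fun i => dvd_neg.mpr (hv i)

lemma Dv.sub {k : ℕ} {v w : MM} (hv : Dv p k v) (hw : Dv p k w) : Dv p k (v - w) :=
  fun i => dvd_sub (hv i) (hw i)

lemma Dv.smul {k : ℕ} {v : MM} (hv : Dv p k v) (c : ℤ_[p]) : Dv p k (c • v) :=
  fun i => Dvd.dvd.mul_left (hv i) c

lemma Dv.mono {k j : ℕ} (h : j ≤ k) {v : MM} (hv : Dv p k v) : Dv p j v :=
  fun i => dvd_trans (pow_dvd_pow _ h) (hv i)

lemma Dv_psmul (k : ℕ) (v : MM) : Dv p k ((p : ℤ_[p])^k • v) :=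
  fun i => Dvd.intro (v i) rfl

lemma Dv.exists_eq {k : ℕ} {v : MM} (hv : Dv p k v) :
    ∃ w : MM, v = (p : ℤ_[p])^k • w := by
  refine ⟨fun i => (hv i).choose, funext fun i => ?_⟩
  simpa using (hv i).choose_spec

lemma Dv_zero (k : ℕ) : Dv p k (0 : MM) := fun i => dvd_zero _

lemma Dv_psmul_up {j : ℕ} {w : MM} (hw : Dv p j w) (k : ℕ) :
    Dv p (k + j) ((p : ℤ_[p])^k • w) := by
  intro i
  rw [Pi.smul_apply, smul_eq_mul, pow_add]
  exact mul_dvd_mul_left _ (hw i)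

lemma Dv1_psmul {k : ℕ} (hk : 1 ≤ k) (v : MM) : Dv p 1 ((p : ℤ_[p])^k • v) := by
  intro i
  rw [Pi.smul_apply, smul_eq_mul, pow_one]
  exact Dvd.dvd.mul_right (dvd_pow_self _ (Nat.one_le_iff_ne_zero.mp hk)) _

lemma psmul_cancel {k : ℕ} {v w : MM} (h : (p : ℤ_[p])^k • v = (p : ℤ_[p])^k • w) : v = w := by
  funext i
  have := congrFun h i
  simp only [Pi.smul_apply, smul_eq_mul] at this
  exact mul_left_cancel₀ (ppow_ne_zero k) this

lemma psmul_eq_zero {k : ℕ} {v : MM} (h : (p : ℤ_[p])^k • v = 0) : v = 0 := by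
  apply psmul_cancel (k := k)
  rw [h, smul_zero]

lemma Dv0 (v : MM) : Dv p 0 v := fun i => by simpa using one_dvd (v i)

lemma eq_zero_of_forall_Dv {v : MM} (h : ∀ k, Dv p k v) : v = 0 := by
  funext i
  have hle : ∀ k : ℕ, ‖v i‖ ≤ (p : ℝ)^(-(k:ℤ)) := by
    intro k
    rw [PadicInt.norm_le_pow_iff_mem_span_pow, Ideal.mem_span_singleton]
    exact h k i
  have h0 : Filter.Tendsto (fun k : ℕ => ((p:ℝ))^(-(k:ℤ))) Filter.atTop (nhds 0) := by
    have hp1 : (1:ℝ) < (p:ℝ) := by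
      exact_mod_cast (Fact.out : p.Prime).one_lt
    have h2 : Filter.Tendsto (fun k : ℕ => ((p:ℝ)⁻¹)^k) Filter.atTop (nhds 0) :=
      tendsto_pow_atTop_nhds_zero_of_lt_one (by positivity) (by
        rw [inv_lt_one_iff₀]; right; exact hp1)
    refine h2.congr (fun k => ?_)
    rw [inv_pow, ← zpow_natCast, ← zpow_neg]
  have : ‖v i‖ ≤ 0 := ge_of_tendsto' h0 (fun k => hle k)
  have := le_antisymm this (norm_nonneg _)
  simpa using this


section Pihom

variable (bb : Module.Basis (Fin n) (ZMod p) Lb)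

/-- the standard basis vector -/
noncomputable def ee (p : ℕ) [Fact p.Prime] {n : ℕ} (i : Fin n) : Fin n → ℤ_[p] := Pi.single i 1

/-- reduction map -/
noncomputable def pihom (x : Fin n → ℤ_[p]) : Lb := ∑ i, PadicInt.toZMod (x i) • bb i

lemma pihom_add (x y : MM) : pihom bb (x + y) = pihom bb x + pihom bb y := by
  simp [pihom, add_smul, Finset.sum_add_distrib]

lemma pihom_smul (c : ℤ_[p]) (x : MM) :
    pihom bb (c • x) = PadicInt.toZMod c • pihom bb x := by
  simp [pihom, Finset.smul_sum, mul_smul]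

lemma pihom_ee (i : Fin n) : pihom bb (ee p i) = bb i := by
  rw [pihom]
  rw [Finset.sum_eq_single i]
  · simp [ee]
  · intro j _ hj
    simp [ee, Pi.single_apply, Ne.symm hj]
  · simp

/-- bundled as an AddMonoidHom -/
noncomputable def pihomA : (Fin n → ℤ_[p]) →+ Lb := AddMonoidHom.mk' (pihom bb) (pihom_add bb)

@[simp] lemma pihomA_apply (x : MM) : pihomA bb x = pihom bb x := rfl

/-- section of pihom -/
noncomputable def sec (v : Lb) : Fin n → ℤ_[p] := fun i => ((bb.repr v i).val : ℤ_[p])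

lemma pihom_sec (v : Lb) : pihom bb (sec bb v) = v := by
  rw [pihom]
  conv_rhs => rw [← bb.sum_repr v]
  refine Finset.sum_congr rfl (fun i _ => ?_)
  rw [sec, toZMod_natCast_val]

lemma pihom_surj : Function.Surjective (pihom bb) :=
  fun v => ⟨sec bb v, pihom_sec bb v⟩

lemma pihom_eq_zero_iff (x : MM) : pihom bb x = 0 ↔ Dv p 1 x := by
  constructor
  · intro h
    have h2 : ∀ i, PadicInt.toZMod (x i) = 0 := by
      have := linearIndependent_iff'.mp bb.linearIndependent Finset.univ
        (fun i => PadicInt.toZMod (x i)) h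
      intro i; exact this i (Finset.mem_univ i)
    intro i
    rw [← pow_one ((p : ℤ_[p]))]
    simpa [toZMod_eq_zero_iff] using h2 i
  · intro h
    obtain ⟨w, rfl⟩ := h.exists_eq
    rw [pihom_smul]
    have : PadicInt.toZMod ((p : ℤ_[p])^1) = 0 := by
      rw [toZMod_eq_zero_iff]; exact ⟨1, by ring⟩
    simp [this]

lemma pihom_dv {x : MM} (h : Dv p 1 x) : pihom bb x = 0 :=
  (pihom_eq_zero_iff bb x).mpr h

/-- expansion of an additive, toZMod-semilinear map along the standard basis -/
lemma expand_basis {A : Type} [AddCommGroup A] [Module (ZMod p) A]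
    (φ : (Fin n → ℤ_[p]) → A)
    (hadd : ∀ x y, φ (x + y) = φ x + φ y)
    (hsmul : ∀ (c : ℤ_[p]) x, φ (c • x) = PadicInt.toZMod c • φ x)
    (x : MM) : φ x = ∑ i, PadicInt.toZMod (x i) • φ (ee p i) := by
  have hx : x = ∑ i, (x i) • ee p i := by
    funext j
    rw [Finset.sum_apply]
    rw [Finset.sum_eq_single j]
    · simp [ee]
    · intro i _ hi; simp [ee, Pi.single_apply, Ne.symm hi]
    · simp
  have hm := map_sum (AddMonoidHom.mk' φ hadd) (fun i => (x i) • ee p i) Finset.univ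
  simp only [AddMonoidHom.mk'_apply] at hm
  conv_lhs => rw [hx]
  rw [hm]
  exact Finset.sum_congr rfl (fun i _ => hsmul _ _)

/-- a map, semilinear in each of three slots, vanishing on basis triples, vanishes -/
lemma trilin_vanish {A : Type} [AddCommGroup A] [Module (ZMod p) A]
    (E : MM → MM → MM → A)
    (hadd1 : ∀ x x' y z, E (x + x') y z = E x y z + E x' y z)
    (hsmul1 : ∀ (c : ℤ_[p]) x y z, E (c • x) y z = PadicInt.toZMod c • E x y z)
    (hadd2 : ∀ x y y' z, E x (y + y') z = E x y z + E x y' z)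
    (hsmul2 : ∀ (c : ℤ_[p]) x y z, E x (c • y) z = PadicInt.toZMod c • E x y z)
    (hadd3 : ∀ x y z z', E x y (z + z') = E x y z + E x y z')
    (hsmul3 : ∀ (c : ℤ_[p]) x y z, E x y (c • z) = PadicInt.toZMod c • E x y z)
    (hbasis : ∀ i j l, E (ee p i) (ee p j) (ee p l) = 0) :
    ∀ x y z, E x y z = 0 := by
  intro x y z
  rw [expand_basis (fun x => E x y z) (fun a b => hadd1 a b y z) (fun c a => hsmul1 c a y z)]
  refine Finset.sum_eq_zero (fun i _ => ?_)
  rw [expand_basis (fun y => E (ee p i) y z) (fun a b => hadd2 _ a b z)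
    (fun c a => hsmul2 c _ a z)]
  rw [Finset.smul_sum]
  refine Finset.sum_eq_zero (fun j _ => ?_)
  rw [expand_basis (fun z => E (ee p i) (ee p j) z) (fun a b => hadd3 _ _ a b)
    (fun c a => hsmul3 c _ _ a)]
  rw [Finset.smul_sum, Finset.smul_sum]
  refine Finset.sum_eq_zero (fun l _ => ?_)
  rw [hbasis i j l]
  simp

lemma bilin_vanish {A : Type} [AddCommGroup A] [Module (ZMod p) A]
    (E : MM → MM → A)
    (hadd1 : ∀ x x' y, E (x + x') y = E x y + E x' y)
    (hsmul1 : ∀ (c : ℤ_[p]) x y, E (c • x) y = PadicInt.toZMod c • E x y)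
    (hadd2 : ∀ x y y', E x (y + y') = E x y + E x y')
    (hsmul2 : ∀ (c : ℤ_[p]) x y, E x (c • y) = PadicInt.toZMod c • E x y)
    (hbasis : ∀ i j, E (ee p i) (ee p j) = 0) :
    ∀ x y, E x y = 0 := by
  intro x y
  rw [expand_basis (fun x => E x y) (fun a b => hadd1 a b y) (fun c a => hsmul1 c a y)]
  refine Finset.sum_eq_zero (fun i _ => ?_)
  rw [expand_basis (fun y => E (ee p i) y) (fun a b => hadd2 _ a b) (fun c a => hsmul2 c _ a)]
  rw [Finset.smul_sum]
  refine Finset.sum_eq_zero (fun j _ => ?_)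
  rw [hbasis i j]
  simp

end Pihom


section Bil

variable {A : Type} [CommRing A] {N : Type} [AddCommGroup N] [Module A N]

/-- the Jacobiator of a bilinear map -/
def Jac (b : N →ₗ[A] N →ₗ[A] N) (x y z : N) : N :=
  b (b x y) z + b (b y z) x + b (b z x) y

lemma skew_of_alt (b : N →ₗ[A] N →ₗ[A] N) (halt : ∀ x, b x x = 0)
    (x y : N) : b x y = - b y x := by
  have h := halt (x + y)
  simp only [map_add, LinearMap.add_apply, halt x, halt y] at h
  rw [eq_neg_iff_add_eq_zero]
  rw [zero_add, add_zero] at h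
  rw [add_comm] at h
  exact h

lemma Jac_alt (b : N →ₗ[A] N →ₗ[A] N) (halt : ∀ x, b x x = 0) :
    ∀ x y z : N, x = y ∨ y = z ∨ x = z → Jac b x y z = 0 := by
  have hs := skew_of_alt b halt
  intro x y z h
  rcases h with rfl | rfl | rfl
  · rw [Jac, halt x]
    rw [hs z x]
    simp [map_neg]
  · rw [Jac, halt y]
    rw [hs y x]
    simp [map_neg]
  · rw [Jac, halt x]
    rw [hs y x]
    simp [map_neg]

lemma Jac_add1 (b : N →ₗ[A] N →ₗ[A] N) (x x' y z : N) :
    Jac b (x + x') y z = Jac b x y z + Jac b x' y z := by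
  simp only [Jac, map_add, LinearMap.add_apply]; abel

lemma Jac_add2 (b : N →ₗ[A] N →ₗ[A] N) (x y y' z : N) :
    Jac b x (y + y') z = Jac b x y z + Jac b x y' z := by
  simp only [Jac, map_add, LinearMap.add_apply]; abel

lemma Jac_add3 (b : N →ₗ[A] N →ₗ[A] N) (x y z z' : N) :
    Jac b x y (z + z') = Jac b x y z + Jac b x y z' := by
  simp only [Jac, map_add, LinearMap.add_apply]; abel

lemma Jac_smul1 (b : N →ₗ[A] N →ₗ[A] N) (c : A) (x y z : N) :
    Jac b (c • x) y z = c • Jac b x y z := by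
  simp only [Jac, map_smul, LinearMap.smul_apply, smul_add]

lemma Jac_smul2 (b : N →ₗ[A] N →ₗ[A] N) (c : A) (x y z : N) :
    Jac b x (c • y) z = c • Jac b x y z := by
  simp only [Jac, map_smul, LinearMap.smul_apply, smul_add]

lemma Jac_smul3 (b : N →ₗ[A] N →ₗ[A] N) (c : A) (x y z : N) :
    Jac b x y (c • z) = c • Jac b x y z := by
  simp only [Jac, map_smul, LinearMap.smul_apply, smul_add]

/-- the key exact identity: the Chevalley-Eilenberg differential (w.r.t. b) of the
Jacobiator of an alternating bilinear map vanishes identically -/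
lemma bigIdentity (b : N →ₗ[A] N →ₗ[A] N) (halt : ∀ x, b x x = 0) (x y z w : N) :
    b x (Jac b y z w) - b y (Jac b x z w) + b z (Jac b x y w) - b w (Jac b x y z)
      - Jac b (b x y) z w + Jac b (b x z) y w - Jac b (b x w) y z
      - Jac b (b y z) x w + Jac b (b y w) x z - Jac b (b z w) x y = 0 := by
  have hs := skew_of_alt b halt
  simp only [Jac, map_add, LinearMap.add_apply]
  simp only [hs (b y z) w, hs (b z w) y, hs w y, hs (b y w) z, hs (b x z) w,
    hs (b z w) x, hs w x, hs (b x w) z, hs (b x y) w, hs (b y w) x,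
    hs (b x w) y, hs (b x y) z, hs (b y z) x, hs z x, hs (b x z) y,
    map_neg, LinearMap.neg_apply, neg_neg]
  simp only [hs (b z (b x y)) w, hs (b z w) (b x y), hs (b w (b x y)) z,
    hs (b y (b x z)) w, hs (b y w) (b x z), hs (b w (b x z)) y,
    hs (b y (b x w)) z, hs (b y z) (b x w), hs (b z (b x w)) y,
    hs (b x (b y z)) w, hs (b w (b y z)) x, hs (b x (b y w)) z,
    hs (b z (b y w)) x, hs (b x (b z w)) y, hs (b y (b z w)) x,
    map_neg, LinearMap.neg_apply, neg_neg]
  abel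

lemma Jac_expand (b f : N →ₗ[A] N →ₗ[A] N) (c : A) (x y z : N) :
    Jac (b + c • f) x y z = Jac b x y z
      + c • (f (b x y) z + b (f x y) z + f (b y z) x + b (f y z) x + f (b z x) y + b (f z x) y)
      + (c * c) • Jac f x y z := by
  simp only [Jac, LinearMap.add_apply, map_add, LinearMap.smul_apply, map_smul, smul_add,
    smul_smul]
  module

end Bil


section Lift

variable (bb : Module.Basis (Fin n) (ZMod p) Lb)

lemma pihom_neg (x : MM) : pihom bb (-x) = - pihom bb x := by
  simpa using (pihomA bb).map_neg x

lemma pihom_zero : pihom bb (0 : MM) = 0 := by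
  simpa using (pihomA bb).map_zero

lemma pihom_sub (x y : MM) : pihom bb (x - y) = pihom bb x - pihom bb y := by
  simpa using (pihomA bb).map_sub x y

/-- structure constants for the lift of a form -/
noncomputable def acoef (form : Lb →ₗ[ZMod p] Lb →ₗ[ZMod p] Lb) (i j : Fin n) : MM :=
  if i < j then sec bb (form (bb i) (bb j))
  else if j < i then -(sec bb (form (bb j) (bb i))) else 0

lemma acoef_antisym (form : Lb →ₗ[ZMod p] Lb →ₗ[ZMod p] Lb) (i j : Fin n) :
    acoef bb form j i = - acoef bb form i j := by
  rcases lt_trichotomy i j with h | h | h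
  · rw [acoef, acoef, if_neg (asymm h), if_pos h, if_pos h]
  · subst h; simp [acoef]
  · rw [acoef, acoef, if_pos h, if_neg (asymm h), if_pos h, neg_neg]

lemma pihom_acoef (form : Lb →ₗ[ZMod p] Lb →ₗ[ZMod p] Lb) (halt : ∀ v, form v v = 0)
    (i j : Fin n) : pihom bb (acoef bb form i j) = form (bb i) (bb j) := by
  rcases lt_trichotomy i j with h | h | h
  · rw [acoef, if_pos h, pihom_sec]
  · subst h
    rw [acoef]
    simp only [lt_irrefl, if_neg, if_false]
    rw [pihom_zero, halt]
  · rw [acoef, if_neg (asymm h), if_pos h, pihom_neg, pihom_sec,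
      skew_of_alt form halt (bb j) (bb i), neg_neg]

/-- the underlying function of the lift -/
noncomputable def liftFun (form : Lb →ₗ[ZMod p] Lb →ₗ[ZMod p] Lb) (x y : MM) : MM :=
  ∑ i, ∑ j, (x i * y j) • acoef bb form i j

/-- the lift of a form, as a bilinear map -/
noncomputable def liftF (form : Lb →ₗ[ZMod p] Lb →ₗ[ZMod p] Lb) :
    MM →ₗ[ℤ_[p]] MM →ₗ[ℤ_[p]] MM :=
  LinearMap.mk₂ ℤ_[p] (liftFun bb form)
    (fun x x' y => by
      simp only [liftFun, Pi.add_apply, add_mul, add_smul, Finset.sum_add_distrib])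
    (fun c x y => by
      simp only [liftFun, Pi.smul_apply, smul_eq_mul, Finset.smul_sum, mul_assoc, mul_smul])
    (fun x y y' => by
      simp only [liftFun, Pi.add_apply, mul_add, add_smul, Finset.sum_add_distrib])
    (fun c x y => by
      simp only [liftFun, Pi.smul_apply, smul_eq_mul, Finset.smul_sum]
      refine Finset.sum_congr rfl (fun i _ => ?_)
      refine Finset.sum_congr rfl (fun j _ => ?_)
      rw [mul_left_comm, mul_smul])

lemma liftF_alt (form : Lb →ₗ[ZMod p] Lb →ₗ[ZMod p] Lb) (x : MM) :
    liftF bb form x x = 0 := by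
  have h2 : liftFun bb form x x + liftFun bb form x x = 0 := by
    nth_rewrite 1 [liftFun]
    rw [Finset.sum_comm, liftFun, ← Finset.sum_add_distrib]
    refine Finset.sum_eq_zero (fun i _ => ?_)
    rw [← Finset.sum_add_distrib]
    refine Finset.sum_eq_zero (fun j _ => ?_)
    rw [acoef_antisym bb form i j, smul_neg, mul_comm]
    exact neg_add_cancel _
  have : liftF bb form x x = liftFun bb form x x := rfl
  rw [this]
  funext i
  have h3 := congrFun h2 i
  simp only [Pi.add_apply, Pi.zero_apply] at h3
  have h4 : (2 : ℤ_[p]) * liftFun bb form x x i = 0 := by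
    rw [two_mul]; exact h3
  rcases mul_eq_zero.mp h4 with h | h
  · exact absurd h two_ne_zero
  · exact h

lemma liftF_basis (form : Lb →ₗ[ZMod p] Lb →ₗ[ZMod p] Lb) (i j : Fin n) :
    liftF bb form (ee p i) (ee p j) = acoef bb form i j := by
  show liftFun bb form (ee p i) (ee p j) = acoef bb form i j
  rw [liftFun]
  rw [Finset.sum_eq_single i]
  · rw [Finset.sum_eq_single j]
    · simp [ee]
    · intro l _ hl
      simp [ee, Pi.single_apply, Ne.symm hl]
    · simp
  · intro k _ hk
    refine Finset.sum_eq_zero (fun l _ => ?_)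
    simp [ee, Pi.single_apply, Ne.symm hk]
  · simp

lemma liftF_compat (form : Lb →ₗ[ZMod p] Lb →ₗ[ZMod p] Lb) (halt : ∀ v, form v v = 0)
    (x y : MM) :
    pihom bb (liftF bb form x y) = form (pihom bb x) (pihom bb y) := by
  have key : ∀ x y, form (pihom bb x) (pihom bb y) - pihom bb (liftF bb form x y) = 0 := by
    refine bilin_vanish _ ?_ ?_ ?_ ?_ ?_
    · intro x x' y
      simp only [pihom_add, map_add, LinearMap.add_apply]
      abel
    · intro c x y
      simp only [pihom_smul, map_smul, LinearMap.smul_apply, smul_sub]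
    · intro x y y'
      simp only [pihom_add, map_add, LinearMap.add_apply]
      abel
    · intro c x y
      simp only [pihom_smul, map_smul, LinearMap.smul_apply, smul_sub]
    · intro i j
      rw [pihom_ee, pihom_ee, liftF_basis, pihom_acoef bb form halt, sub_self]
  have := key x y
  rw [sub_eq_zero] at this
  exact this.symm

end Lift


section LieIdent

variable {L : Type} [LieRing L] [LieAlgebra (ZMod p) L]

lemma jac_lie (x y z : L) : ⁅⁅x, y⁆, z⁆ + ⁅⁅y, z⁆, x⁆ + ⁅⁅z, x⁆, y⁆ = 0 := by
  have h' : ⁅⁅x, y⁆, z⁆ + ⁅⁅y, z⁆, x⁆ + ⁅⁅z, x⁆, y⁆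
      = -(⁅x, ⁅y, z⁆⁆ + ⁅y, ⁅z, x⁆⁆ + ⁅z, ⁅x, y⁆⁆) := by
    rw [← lie_skew x ⁅y, z⁆, ← lie_skew y ⁅z, x⁆, ← lie_skew z ⁅x, y⁆]
    abel
  rw [h', lie_jacobi, neg_zero]

lemma deltaC (form : L →ₗ[ZMod p] L →ₗ[ZMod p] L) (halt : ∀ v, form v v = 0) (x y z : L) :
    (⁅x, form y z⁆ - ⁅y, form x z⁆ + ⁅z, form x y⁆
      - form ⁅x, y⁆ z + form ⁅x, z⁆ y - form ⁅y, z⁆ x)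
    + (form ⁅x, y⁆ z + ⁅form x y, z⁆ + form ⁅y, z⁆ x + ⁅form y z, x⁆
      + form ⁅z, x⁆ y + ⁅form z x, y⁆) = 0 := by
  have hs := skew_of_alt form halt
  have h1 : (⁅form x y, z⁆ : L) = -⁅z, form x y⁆ := by
    rw [← lie_skew z (form x y), neg_neg]
  have h2 : (⁅form y z, x⁆ : L) = -⁅x, form y z⁆ := by
    rw [← lie_skew x (form y z), neg_neg]
  have h3 : (⁅form z x, y⁆ : L) = -⁅y, form z x⁆ := by
    rw [← lie_skew y (form z x), neg_neg]
  have h4 : (⁅z, x⁆ : L) = -⁅x, z⁆ := by rw [← lie_skew x z, neg_neg]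
  rw [h1, h2, h3, h4, hs z x]
  simp only [map_neg, LinearMap.neg_apply, lie_neg]
  abel

end LieIdent

/-- the Lie bracket as a bilinear map -/
noncomputable def brform (p : ℕ) [Fact p.Prime] (L : Type) [LieRing L]
    [LieAlgebra (ZMod p) L] : L →ₗ[ZMod p] L →ₗ[ZMod p] L :=
  LinearMap.mk₂ (ZMod p) (fun x y => ⁅x, y⁆) add_lie smul_lie lie_add lie_smul

@[simp] lemma brform_apply {L : Type} [LieRing L] [LieAlgebra (ZMod p) L] (x y : L) :
    brform p L x y = ⁅x, y⁆ := rfl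

section Step

variable (bb : Module.Basis (Fin n) (ZMod p) Lb)

/-- invariant for the inductive construction -/
structure Good (k : ℕ) (b : MM →ₗ[ℤ_[p]] MM →ₗ[ℤ_[p]] MM) : Prop where
  alt : ∀ x, b x x = 0
  compat : ∀ x y, pihom bb (b x y) = ⁅pihom bb x, pihom bb y⁆
  dv : ∀ x y z, Dv p (k + 1) (Jac b x y z)

lemma base_good : Good bb 0 (liftF bb (brform p Lb)) := by
  have hc : ∀ x y, pihom bb (liftF bb (brform p Lb) x y) = ⁅pihom bb x, pihom bb y⁆ := by
    intro x y
    rw [liftF_compat bb _ (fun v => lie_self v), brform_apply]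
  constructor
  · exact liftF_alt bb _
  · exact hc
  · intro x y z
    show Dv p 1 _
    refine (pihom_eq_zero_iff bb _).mp ?_
    rw [Jac, pihom_add, pihom_add, hc, hc, hc, hc, hc, hc]
    exact jac_lie _ _ _

/-- build a trilinear map on Lb from basis values -/
noncomputable def mkTri (g : Fin n → Fin n → Fin n → Lb) :
    Lb →ₗ[ZMod p] Lb →ₗ[ZMod p] Lb →ₗ[ZMod p] Lb :=
  bb.constr (ZMod p) (fun i => bb.constr (ZMod p) (fun j => bb.constr (ZMod p) (fun l => g i j l)))

lemma mkTri_basis (g : Fin n → Fin n → Fin n → Lb) (i j l : Fin n) :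
    mkTri bb g (bb i) (bb j) (bb l) = g i j l := by
  unfold mkTri
  rw [Module.Basis.constr_basis, Module.Basis.constr_basis, Module.Basis.constr_basis]

lemma step
    (hH3 : ∀ J : Lb →ₗ[ZMod p] Lb →ₗ[ZMod p] Lb →ₗ[ZMod p] Lb,
      (∀ x y z : Lb, x = y ∨ y = z ∨ x = z → J x y z = 0) →
      (∀ x y z w : Lb,
        ⁅x, J y z w⁆ - ⁅y, J x z w⁆ + ⁅z, J x y w⁆ - ⁅w, J x y z⁆
          - J ⁅x, y⁆ z w + J ⁅x, z⁆ y w - J ⁅x, w⁆ y z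
          - J ⁅y, z⁆ x w + J ⁅y, w⁆ x z - J ⁅z, w⁆ x y = 0) →
      ∃ form : Lb →ₗ[ZMod p] Lb →ₗ[ZMod p] Lb,
        (∀ v, form v v = 0) ∧
        ∀ x y z : Lb,
          J x y z = ⁅x, form y z⁆ - ⁅y, form x z⁆ + ⁅z, form x y⁆
            - form ⁅x, y⁆ z + form ⁅x, z⁆ y - form ⁅y, z⁆ x)
    (k : ℕ) (hk : 1 ≤ k) (b : MM →ₗ[ℤ_[p]] MM →ₗ[ℤ_[p]] MM)
    (halt : ∀ x, b x x = 0)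
    (hcompat : ∀ x y, pihom bb (b x y) = ⁅pihom bb x, pihom bb y⁆)
    (hdv : ∀ x y z, Dv p k (Jac b x y z)) :
    ∃ b' : MM →ₗ[ℤ_[p]] MM →ₗ[ℤ_[p]] MM, (∀ x, b' x x = 0)
      ∧ (∀ x y, pihom bb (b' x y) = ⁅pihom bb x, pihom bb y⁆)
      ∧ (∀ x y z, Dv p (k + 1) (Jac b' x y z))
      ∧ (∀ x y, Dv p k (b' x y - b x y)) := by
  classical
  -- divide the Jacobiator by p^k
  obtain ⟨jt, hjt⟩ : ∃ jt : MM → MM → MM → MM,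
      ∀ x y z, (p : ℤ_[p])^k • jt x y z = Jac b x y z := by
    refine ⟨fun x y z i => (hdv x y z i).choose, fun x y z => ?_⟩
    funext i
    simp only [Pi.smul_apply, smul_eq_mul]
    exact ((hdv x y z i).choose_spec).symm
  have uniq : ∀ (v : MM) x y z, (p : ℤ_[p])^k • v = Jac b x y z → v = jt x y z := by
    intro v x y z hv
    exact psmul_cancel (hv.trans (hjt x y z).symm)
  have jt_add1 : ∀ x x' y z, jt (x + x') y z = jt x y z + jt x' y z := fun x x' y z =>
    (uniq _ _ _ _ (by rw [smul_add, hjt, hjt, ← Jac_add1])).symm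
  have jt_add2 : ∀ x y y' z, jt x (y + y') z = jt x y z + jt x y' z := fun x y y' z =>
    (uniq _ _ _ _ (by rw [smul_add, hjt, hjt, ← Jac_add2])).symm
  have jt_add3 : ∀ x y z z', jt x y (z + z') = jt x y z + jt x y z' := fun x y z z' =>
    (uniq _ _ _ _ (by rw [smul_add, hjt, hjt, ← Jac_add3])).symm
  have jt_smul1 : ∀ (c : ℤ_[p]) x y z, jt (c • x) y z = c • jt x y z := fun c x y z =>
    (uniq _ _ _ _ (by rw [smul_comm, hjt, ← Jac_smul1])).symm
  have jt_smul2 : ∀ (c : ℤ_[p]) x y z, jt x (c • y) z = c • jt x y z := fun c x y z =>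
    (uniq _ _ _ _ (by rw [smul_comm, hjt, ← Jac_smul2])).symm
  have jt_smul3 : ∀ (c : ℤ_[p]) x y z, jt x y (c • z) = c • jt x y z := fun c x y z =>
    (uniq _ _ _ _ (by rw [smul_comm, hjt, ← Jac_smul3])).symm
  have jt_alt : ∀ x y z, x = y ∨ y = z ∨ x = z → jt x y z = 0 := by
    intro x y z h
    refine (uniq 0 x y z ?_).symm
    rw [smul_zero]
    exact (Jac_alt b halt x y z h).symm
  -- the reduced cocycle
  set Jb : Lb →ₗ[ZMod p] Lb →ₗ[ZMod p] Lb →ₗ[ZMod p] Lb :=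
    mkTri bb (fun i j l => pihom bb (jt (ee p i) (ee p j) (ee p l))) with hJbdef
  have key : ∀ x y z, pihom bb (jt x y z) = Jb (pihom bb x) (pihom bb y) (pihom bb z) := by
    have h0 := trilin_vanish
      (E := fun x y z => Jb (pihom bb x) (pihom bb y) (pihom bb z) - pihom bb (jt x y z))
      (fun x x' y z => by
        simp only [pihom_add, jt_add1, map_add, LinearMap.add_apply]; abel)
      (fun c x y z => by
        simp only [pihom_smul, jt_smul1, map_smul, LinearMap.smul_apply, smul_sub])
      (fun x y y' z => by
        simp only [pihom_add, jt_add2, map_add, LinearMap.add_apply]; abel)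
      (fun c x y z => by
        simp only [pihom_smul, jt_smul2, map_smul, LinearMap.smul_apply, smul_sub])
      (fun x y z z' => by
        simp only [pihom_add, jt_add3, map_add, LinearMap.add_apply]; abel)
      (fun c x y z => by
        simp only [pihom_smul, jt_smul3, map_smul, LinearMap.smul_apply, smul_sub])
      (fun i j l => by
        rw [pihom_ee, pihom_ee, pihom_ee, hJbdef, mkTri_basis, sub_self])
    intro x y z
    have := h0 x y z
    rw [sub_eq_zero] at this
    exact this.symm
  have halt' : ∀ x y z : Lb, x = y ∨ y = z ∨ x = z → Jb x y z = 0 := by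
    intro x y z h
    rcases h with rfl | rfl | rfl
    · obtain ⟨u, hu⟩ := pihom_surj bb x
      obtain ⟨w, hw⟩ := pihom_surj bb z
      rw [← hu, ← hw, ← key, jt_alt u u w (Or.inl rfl), pihom_zero]
    · obtain ⟨u, hu⟩ := pihom_surj bb x
      obtain ⟨w, hw⟩ := pihom_surj bb y
      rw [← hu, ← hw, ← key, jt_alt u w w (Or.inr (Or.inl rfl)), pihom_zero]
    · obtain ⟨u, hu⟩ := pihom_surj bb x
      obtain ⟨w, hw⟩ := pihom_surj bb y
      rw [← hu, ← hw, ← key, jt_alt u w u (Or.inr (Or.inr rfl)), pihom_zero]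
  have hcoc : ∀ x y z w : Lb,
      ⁅x, Jb y z w⁆ - ⁅y, Jb x z w⁆ + ⁅z, Jb x y w⁆ - ⁅w, Jb x y z⁆
        - Jb ⁅x, y⁆ z w + Jb ⁅x, z⁆ y w - Jb ⁅x, w⁆ y z
        - Jb ⁅y, z⁆ x w + Jb ⁅y, w⁆ x z - Jb ⁅z, w⁆ x y = 0 := by
    intro x y z w
    obtain ⟨u, rfl⟩ := pihom_surj bb x
    obtain ⟨v, rfl⟩ := pihom_surj bb y
    obtain ⟨s, rfl⟩ := pihom_surj bb z
    obtain ⟨t, rfl⟩ := pihom_surj bb w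
    have hU : b u (jt v s t) - b v (jt u s t) + b s (jt u v t) - b t (jt u v s)
        - jt (b u v) s t + jt (b u s) v t - jt (b u t) v s
        - jt (b v s) u t + jt (b v t) u s - jt (b s t) u v = 0 := by
      apply psmul_eq_zero (k := k)
      simp only [smul_sub, smul_add]
      simp only [← map_smul]
      simp only [hjt]
      exact bigIdentity b halt u v s t
    have h2 := congrArg (pihom bb) hU
    simp only [pihom_sub, pihom_add, pihom_zero, hcompat, key] at h2
    exact h2
  obtain ⟨form, formalt, hform⟩ := hH3 Jb halt' hcoc
  refine ⟨b + (p : ℤ_[p])^k • liftF bb form, ?_, ?_, ?_, ?_⟩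
  · intro x
    simp only [LinearMap.add_apply, LinearMap.smul_apply, halt x, liftF_alt bb form x,
      smul_zero, add_zero]
  · intro x y
    simp only [LinearMap.add_apply, LinearMap.smul_apply]
    rw [pihom_add, pihom_dv bb (Dv1_psmul hk _), add_zero, hcompat]
  · intro x y z
    rw [Jac_expand, ← hjt x y z, ← smul_add]
    refine Dv.add ?_ ?_
    · have h1 : Dv p 1 (jt x y z
          + (liftF bb form (b x y) z + b (liftF bb form x y) z
            + liftF bb form (b y z) x + b (liftF bb form y z) x
            + liftF bb form (b z x) y + b (liftF bb form z x) y)) := by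
        refine (pihom_eq_zero_iff bb _).mp ?_
        simp only [pihom_add, hcompat, liftF_compat bb form formalt, key]
        rw [hform]
        exact deltaC form formalt _ _ _
      exact Dv_psmul_up h1 k
    · rw [← pow_add]
      exact (Dv_psmul (k + k) _).mono (by omega)
  · intro x y
    simp only [LinearMap.add_apply, LinearMap.smul_apply, add_sub_cancel_left]
    exact Dv_psmul k _

variable (hH3 : ∀ J : Lb →ₗ[ZMod p] Lb →ₗ[ZMod p] Lb →ₗ[ZMod p] Lb,
      (∀ x y z : Lb, x = y ∨ y = z ∨ x = z → J x y z = 0) →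
      (∀ x y z w : Lb,
        ⁅x, J y z w⁆ - ⁅y, J x z w⁆ + ⁅z, J x y w⁆ - ⁅w, J x y z⁆
          - J ⁅x, y⁆ z w + J ⁅x, z⁆ y w - J ⁅x, w⁆ y z
          - J ⁅y, z⁆ x w + J ⁅y, w⁆ x z - J ⁅z, w⁆ x y = 0) →
      ∃ form : Lb →ₗ[ZMod p] Lb →ₗ[ZMod p] Lb,
        (∀ v, form v v = 0) ∧
        ∀ x y z : Lb,
          J x y z = ⁅x, form y z⁆ - ⁅y, form x z⁆ + ⁅z, form x y⁆
            - form ⁅x, y⁆ z + form ⁅x, z⁆ y - form ⁅y, z⁆ x)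

/-- one step of the construction, packaged -/
noncomputable def stepC (m : ℕ)
    (bd : {b : MM →ₗ[ℤ_[p]] MM →ₗ[ℤ_[p]] MM // Good bb m b}) :
    {b' : MM →ₗ[ℤ_[p]] MM →ₗ[ℤ_[p]] MM //
      Good bb (m + 1) b' ∧ ∀ x y, Dv p (m + 1) (b' x y - bd.1 x y)} :=
  ⟨(step bb hH3 (m + 1) (Nat.le_add_left 1 m) bd.1 bd.2.alt bd.2.compat bd.2.dv).choose, by
    have h := (step bb hH3 (m + 1) (Nat.le_add_left 1 m) bd.1 bd.2.alt bd.2.compat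
      bd.2.dv).choose_spec
    exact ⟨⟨h.1, h.2.1, h.2.2.1⟩, h.2.2.2⟩⟩

/-- the sequence of better and better brackets -/
noncomputable def seq : (m : ℕ) → {b : MM →ₗ[ℤ_[p]] MM →ₗ[ℤ_[p]] MM // Good bb m b}
  | 0 => ⟨liftF bb (brform p Lb), base_good bb⟩
  | (m + 1) => ⟨(stepC bb hH3 m (seq m)).1, (stepC bb hH3 m (seq m)).2.1⟩

lemma seq_diff (m : ℕ) :
    ∀ x y, Dv p (m + 1) ((seq bb hH3 (m + 1)).1 x y - (seq bb hH3 m).1 x y) := by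
  have h := (stepC bb hH3 m (seq bb hH3 m)).2.2
  exact h

lemma seq_diff_le (m k : ℕ) (h : m ≤ k) :
    ∀ x y, Dv p (m + 1) ((seq bb hH3 k).1 x y - (seq bb hH3 m).1 x y) := by
  induction k, h using Nat.le_induction with
  | base =>
    intro x y
    rw [sub_self]
    exact Dv_zero _
  | succ k hk ih =>
    intro x y
    have h1 := Dv.mono (show m + 1 ≤ k + 1 by omega) (seq_diff bb hH3 k x y)
    have h2 := ih x y
    have h3 := h1.add h2
    rwa [sub_add_sub_cancel] at h3

end Step


section Limit

variable (bb : Module.Basis (Fin n) (ZMod p) Lb)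

lemma Dv_iff_norm (k : ℕ) (v : MM) : Dv p k v ↔ ‖v‖ ≤ (p : ℝ)^(-(k : ℤ)) := by
  rw [pi_norm_le_iff_of_nonneg (by positivity)]
  refine forall_congr' fun i => ?_
  rw [PadicInt.norm_le_pow_iff_mem_span_pow, Ideal.mem_span_singleton]

variable (hH3 : ∀ J : Lb →ₗ[ZMod p] Lb →ₗ[ZMod p] Lb →ₗ[ZMod p] Lb,
      (∀ x y z : Lb, x = y ∨ y = z ∨ x = z → J x y z = 0) →
      (∀ x y z w : Lb,
        ⁅x, J y z w⁆ - ⁅y, J x z w⁆ + ⁅z, J x y w⁆ - ⁅w, J x y z⁆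
          - J ⁅x, y⁆ z w + J ⁅x, z⁆ y w - J ⁅x, w⁆ y z
          - J ⁅y, z⁆ x w + J ⁅y, w⁆ x z - J ⁅z, w⁆ x y = 0) →
      ∃ form : Lb →ₗ[ZMod p] Lb →ₗ[ZMod p] Lb,
        (∀ v, form v v = 0) ∧
        ∀ x y z : Lb,
          J x y z = ⁅x, form y z⁆ - ⁅y, form x z⁆ + ⁅z, form x y⁆
            - form ⁅x, y⁆ z + form ⁅x, z⁆ y - form ⁅y, z⁆ x)

lemma seq_cauchy (x y : MM) : CauchySeq (fun m => (seq bb hH3 m).1 x y) := by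
  have hp1 : (1 : ℝ) < (p : ℝ) := by exact_mod_cast (Fact.out : p.Prime).one_lt
  refine cauchySeq_of_le_geometric ((p : ℝ)⁻¹) 1 (by rw [inv_lt_one_iff₀]; right; exact hp1)
    (fun m => ?_)
  rw [dist_eq_norm, norm_sub_rev]
  have h1 := (Dv_iff_norm (m + 1) _).mp (seq_diff bb hH3 m x y)
  refine le_trans h1 ?_
  rw [one_mul]
  have he : ((p : ℝ))^(-((m + 1 : ℕ) : ℤ)) = (p : ℝ)⁻¹^(m + 1) := by
    rw [inv_pow, ← zpow_natCast, ← zpow_neg]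
  rw [he, pow_succ]
  have h2 : (0 : ℝ) < (p : ℝ)⁻¹ := by positivity
  exact mul_le_of_le_one_right (pow_nonneg h2.le m)
    (by rw [inv_le_one_iff₀]; right; exact hp1.le)

include bb hH3 in
/-- the main construction -/
lemma main : Nonempty (PadicLieLift p Lb) := by
  classical
  have hconv : ∀ x y : MM, ∃ l : MM,
      Filter.Tendsto (fun m => (seq bb hH3 m).1 x y) Filter.atTop (nhds l) :=
    fun x y => cauchySeq_tendsto_of_complete (seq_cauchy bb hH3 x y)
  choose Bf hBf using hconv
  have Badd1 : ∀ x x' y, Bf (x + x') y = Bf x y + Bf x' y := by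
    intro x x' y
    refine tendsto_nhds_unique (hBf (x + x') y) ?_
    exact ((hBf x y).add (hBf x' y)).congr
      (fun m => by simp only [map_add, LinearMap.add_apply])
  have Bsmul1 : ∀ (c : ℤ_[p]) x y, Bf (c • x) y = c • Bf x y := by
    intro c x y
    refine tendsto_nhds_unique (hBf (c • x) y) ?_
    exact ((hBf x y).const_smul c).congr
      (fun m => by simp only [map_smul, LinearMap.smul_apply])
  have Badd2 : ∀ x y y', Bf x (y + y') = Bf x y + Bf x y' := by
    intro x y y'
    refine tendsto_nhds_unique (hBf x (y + y')) ?_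
    exact ((hBf x y).add (hBf x y')).congr (fun m => by simp only [map_add])
  have Bsmul2 : ∀ (c : ℤ_[p]) x y, Bf x (c • y) = c • Bf x y := by
    intro c x y
    refine tendsto_nhds_unique (hBf x (c • y)) ?_
    exact ((hBf x y).const_smul c).congr (fun m => by simp only [map_smul])
  have Balt : ∀ x, Bf x x = 0 := by
    intro x
    refine tendsto_nhds_unique (hBf x x) ?_
    exact tendsto_const_nhds.congr (fun m => ((seq bb hH3 m).2.alt x).symm)
  have Bclose : ∀ m x y, Dv p (m + 1) (Bf x y - (seq bb hH3 m).1 x y) := by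
    intro m x y
    rw [Dv_iff_norm]
    have ht := (hBf x y).sub_const ((seq bb hH3 m).1 x y)
    refine le_of_tendsto ht.norm (Filter.eventually_atTop.mpr ⟨m, fun j hj => ?_⟩)
    exact (Dv_iff_norm _ _).mp (seq_diff_le bb hH3 m j hj x y)
  have Bsub1 : ∀ a c z, Bf a z - Bf c z = Bf (a - c) z := by
    intro a c z
    have h := Badd1 (a - c) c z
    rw [sub_add_cancel] at h
    rw [h, add_sub_cancel_right]
  have Bdv1 : ∀ (m : ℕ) w z, Dv p m w → Dv p m (Bf w z) := by
    intro m w z hw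
    obtain ⟨w', rfl⟩ := hw.exists_eq
    rw [Bsmul1]
    exact Dv_psmul m _
  have Bcompat : ∀ x y, pihom bb (Bf x y) = ⁅pihom bb x, pihom bb y⁆ := by
    intro x y
    have hx : Bf x y = (seq bb hH3 0).1 x y + (Bf x y - (seq bb hH3 0).1 x y) := by abel
    rw [hx, pihom_add, (seq bb hH3 0).2.compat, pihom_dv bb (Bclose 0 x y), add_zero]
  have Bjac : ∀ x y z, Bf (Bf x y) z + Bf (Bf y z) x + Bf (Bf z x) y = 0 := by
    intro x y z
    refine eq_zero_of_forall_Dv (fun k => ?_)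
    cases k with
    | zero => exact Dv0 _
    | succ k =>
      have hc := (seq bb hH3 k).2.dv x y z
      set c := (seq bb hH3 k).1 with hcdef
      have decomp : Bf (Bf x y) z + Bf (Bf y z) x + Bf (Bf z x) y
          = Jac c x y z
            + ((Bf (Bf x y) z - Bf (c x y) z) + (Bf (c x y) z - c (c x y) z))
            + ((Bf (Bf y z) x - Bf (c y z) x) + (Bf (c y z) x - c (c y z) x))
            + ((Bf (Bf z x) y - Bf (c z x) y) + (Bf (c z x) y - c (c z x) y)) := by
        rw [Jac]; abel
      rw [decomp]
      refine ((hc.add (Dv.add ?_ ?_)).add (Dv.add ?_ ?_)).add (Dv.add ?_ ?_)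
      · rw [Bsub1]; exact Bdv1 _ _ _ (Bclose k x y)
      · exact Bclose k (c x y) z
      · rw [Bsub1]; exact Bdv1 _ _ _ (Bclose k y z)
      · exact Bclose k (c y z) x
      · rw [Bsub1]; exact Bdv1 _ _ _ (Bclose k z x)
      · exact Bclose k (c z x) y
  refine ⟨@PadicLieLift.mk p _ Lb _ _ (Fin n → ℤ_[p]) _ _ inferInstance inferInstance
    (LinearMap.mk₂ ℤ_[p] Bf Badd1 Bsmul1 Badd2 Bsmul2)
    Balt
    (fun x y z => Bjac x y z)
    (pihomA bb)
    (pihom_surj bb)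
    (fun c x => pihom_smul bb c x)
    ?_
    (fun x y => Bcompat x y)⟩
  intro x
  rw [pihomA_apply, pihom_eq_zero_iff]
  constructor
  · intro h
    obtain ⟨w, rfl⟩ := h.exists_eq
    rw [pow_one]
    exact Submodule.smul_mem_pointwise_smul w _ ⊤ trivial
  · intro h
    have h' : x ∈ (p : ℤ_[p]) • ((⊤ : Submodule ℤ_[p] MM) : Set MM) := by
      rw [← Submodule.coe_pointwise_smul]
      exact h
    obtain ⟨w, -, rfl⟩ := Set.mem_smul_set.mp h'
    intro i
    rw [pow_one]
    exact ⟨w i, rfl⟩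

end Limit

end Stmt10

/-- A finite-dimensional Lie algebra `L̄` over `F_p` with `H³(L̄, ad) = 0`
(every alternating Chevalley–Eilenberg 3-cocycle with adjoint coefficients is the
coboundary of an alternating 2-form) lifts to a p-adic Lie algebra: there is a Lie
algebra over `ℤ_p`, finitely generated and free as a `ℤ_p`-module, whose reduction
modulo `p` is isomorphic to `L̄`. -/
theorem stmt_10 (p : ℕ) [Fact p.Prime] (Lb : Type)
    [LieRing Lb] [LieAlgebra (ZMod p) Lb] [FiniteDimensional (ZMod p) Lb]
    (hH3 : ∀ J : Lb →ₗ[ZMod p] Lb →ₗ[ZMod p] Lb →ₗ[ZMod p] Lb,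
      (∀ x y z : Lb, x = y ∨ y = z ∨ x = z → J x y z = 0) →
      (∀ x y z w : Lb,
        ⁅x, J y z w⁆ - ⁅y, J x z w⁆ + ⁅z, J x y w⁆ - ⁅w, J x y z⁆
          - J ⁅x, y⁆ z w + J ⁅x, z⁆ y w - J ⁅x, w⁆ y z
          - J ⁅y, z⁆ x w + J ⁅y, w⁆ x z - J ⁅z, w⁆ x y = 0) →
      ∃ form : Lb →ₗ[ZMod p] Lb →ₗ[ZMod p] Lb,
        (∀ v, form v v = 0) ∧
        ∀ x y z : Lb,
          J x y z = ⁅x, form y z⁆ - ⁅y, form x z⁆ + ⁅z, form x y⁆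
            - form ⁅x, y⁆ z + form ⁅x, z⁆ y - form ⁅y, z⁆ x) :
    Nonempty (PadicLieLift p Lb) := by
  exact Stmt10.main (Module.finBasis (ZMod p) Lb) hH3
end

section
/- In the setting above, if ⟨·,·⟩₂ − ⟨·,·⟩₁ = −dφ for some linear map φ : L̄ → L̄ (a 1-cochain), then Ψ = Id + ψ∘φ∘λ : B → B is an automorphism of the R_{k+1}-module B satisfying [Ψ(x),Ψ(y)]₂ = Ψ([x,y]₁) for all x,y ∈ B; hence Ψ is a Lie algebra isomorphism from (B,[·,·]₁) to (B,[·,·]₂) inducing the identity on L. -/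
open Pointwise

/-!
Write `N = ψ ∘ φ ∘ λ`. Since `λ ∘ ψ = 0`, `N² = 0` and `Ψ = 1 + N` has inverse `1 - N`. Every
bracket `β` lifting `brb` satisfies `β x (ψ w) = ψ (brb (λ x) w)`, because `ψ (λ y) = π^k y`, and
`β (ψ w) (ψ w') = 0` as `π^{2k} = 0`. Expanding `[x + N x, y + N y]₂` therefore leaves
`[x, y]₀ + ψ (⟨u, v⟩₂ + [u, φ v] + [φ u, v])` with `u = λ x`, `v = λ y`, while
`Ψ [x, y]₁ = [x, y]₀ + ψ (⟨u, v⟩₁ + φ [u, v])`; the two agree precisely when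
`⟨·,·⟩₂ - ⟨·,·⟩₁ = -dφ`.
-/

def LinearEquiv.idAddOfSqEqZero {S M : Type*} [Semiring S] [AddCommGroup M] [Module S M]
    (N : M →ₗ[S] M) (hN : ∀ x, N (N x) = 0) : M ≃ₗ[S] M :=
  LinearEquiv.ofLinearMap (LinearMap.id + N) (LinearMap.id - N)
    (by ext x; simp [hN]) (by ext x; simp [hN])

@[simp] theorem LinearEquiv.idAddOfSqEqZero_apply {S M : Type*} [Semiring S] [AddCommGroup M]
    [Module S M] (N : M →ₗ[S] M) (hN : ∀ x, N (N x) = 0) (x : M) :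
    LinearEquiv.idAddOfSqEqZero N hN x = x + N x := rfl

section Reduction

variable {R : Type} [CommRing R] {π : R} {k : ℕ}
variable {B : Type} [AddCommGroup B] [Module (Rmod R π (k + 1)) B]

theorem pbar_pow_eq_zero {n : ℕ} (hn : k + 1 ≤ n) : pbar R π k ^ n = 0 := by
  obtain ⟨m, rfl⟩ := Nat.exists_eq_add_of_le hn
  rw [pow_add, ← map_pow, Ideal.Quotient.eq_zero_iff_mem.2 (Ideal.mem_span_singleton_self _),
    zero_mul]

theorem exists_lam_eq (w : Lbar R π k B) : ∃ y, lam R π k B y = w :=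
  Submodule.mkQ_surjective _ w

theorem pbar_smul_eq_zero (w : Lbar R π k B) : pbar R π k • w = 0 := by
  obtain ⟨y, rfl⟩ := exists_lam_eq w
  rw [← map_smul, Submodule.mkQ_apply, Submodule.Quotient.mk_eq_zero]
  exact Submodule.smul_mem_pointwise_smul y _ _ Submodule.mem_top

theorem lam_psi (hk : 1 ≤ k) (w : Lbar R π k B) : lam R π k B (psi R π k B w) = 0 := by
  obtain ⟨y, rfl⟩ := exists_lam_eq w
  have hpow : pbar R π k ^ k = pbar R π k ^ (k - 1) * pbar R π k := by
    rw [← pow_succ, Nat.sub_add_cancel hk]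
  rw [psi_apply, map_smul, hpow, mul_smul, pbar_smul_eq_zero, smul_zero]

theorem modk_psi (w : Lbar R π k B) : modk R π k B (psi R π k B w) = 0 := by
  obtain ⟨y, rfl⟩ := exists_lam_eq w
  rw [psi_apply, Submodule.mkQ_apply, Submodule.Quotient.mk_eq_zero]
  exact Submodule.smul_mem_pointwise_smul y _ _ Submodule.mem_top

variable (β : B →ₗ[Rmod R π (k + 1)] B →ₗ[Rmod R π (k + 1)] B)
  {β' : Lbar R π k B →ₗ[Rmod R π (k + 1)] Lbar R π k B →ₗ[Rmod R π (k + 1)] Lbar R π k B}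

theorem apply_psi_right (hβ : ∀ x y, lam R π k B (β x y) = β' (lam R π k B x) (lam R π k B y))
    (x : B) (w : Lbar R π k B) : β x (psi R π k B w) = psi R π k B (β' (lam R π k B x) w) := by
  obtain ⟨y, rfl⟩ := exists_lam_eq w
  rw [psi_apply, map_smul, ← hβ, psi_apply]

theorem apply_psi_left (hβ : ∀ x y, lam R π k B (β x y) = β' (lam R π k B x) (lam R π k B y))
    (w : Lbar R π k B) (y : B) : β (psi R π k B w) y = psi R π k B (β' w (lam R π k B y)) := by
  obtain ⟨x, rfl⟩ := exists_lam_eq w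
  rw [psi_apply, LinearMap.map_smul₂, ← hβ, psi_apply]

theorem apply_psi_psi (hk : 1 ≤ k) (w w' : Lbar R π k B) :
    β (psi R π k B w) (psi R π k B w') = 0 := by
  obtain ⟨x, rfl⟩ := exists_lam_eq w
  obtain ⟨y, rfl⟩ := exists_lam_eq w'
  rw [psi_apply, psi_apply, LinearMap.map_smul₂, map_smul, smul_smul, ← pow_add,
    pbar_pow_eq_zero (by omega), zero_smul]

variable {β₀ : B →ₗ[Rmod R π (k + 1)] B →ₗ[Rmod R π (k + 1)] B}
  {f : Lbar R π k B →ₗ[Rmod R π (k + 1)] Lbar R π k B →ₗ[Rmod R π (k + 1)] Lbar R π k B}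

theorem lam_apply_of_eq_add_psi (hk : 1 ≤ k) (hβ : ∀ x y, β x y = β₀ x y + psi R π k B (f (lam R π k B x) (lam R π k B y)))
    (x y : B) : lam R π k B (β x y) = lam R π k B (β₀ x y) := by
  rw [hβ, map_add, lam_psi hk, add_zero]

theorem apply_add_psi_add_psi (hk : 1 ≤ k)
    (hβ₀ : ∀ x y, lam R π k B (β₀ x y) = β' (lam R π k B x) (lam R π k B y))
    (hβ : ∀ x y, β x y = β₀ x y + psi R π k B (f (lam R π k B x) (lam R π k B y)))
    (φ : Lbar R π k B →ₗ[Rmod R π (k + 1)] Lbar R π k B) (x y : B) :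
    β (x + psi R π k B (φ (lam R π k B x))) (y + psi R π k B (φ (lam R π k B y))) =
      β₀ x y + psi R π k B (f (lam R π k B x) (lam R π k B y) +
        β' (lam R π k B x) (φ (lam R π k B y)) + β' (φ (lam R π k B x)) (lam R π k B y)) := by
  have hβ' x y : lam R π k B (β x y) = β' (lam R π k B x) (lam R π k B y) :=
    (lam_apply_of_eq_add_psi β hk hβ x y).trans (hβ₀ x y)
  rw [map_add, map_add, LinearMap.add_apply, LinearMap.add_apply, apply_psi_psi β hk,
    apply_psi_right β hβ', apply_psi_left β hβ', hβ x y, map_add, map_add]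
  abel

theorem add_psi_apply_of_eq_add_psi (hk : 1 ≤ k)
    (hβ₀ : ∀ x y, lam R π k B (β₀ x y) = β' (lam R π k B x) (lam R π k B y))
    (hβ : ∀ x y, β x y = β₀ x y + psi R π k B (f (lam R π k B x) (lam R π k B y)))
    (φ : Lbar R π k B →ₗ[Rmod R π (k + 1)] Lbar R π k B) (x y : B) :
    β x y + psi R π k B (φ (lam R π k B (β x y))) =
      β₀ x y + psi R π k B (f (lam R π k B x) (lam R π k B y) +
        φ (β' (lam R π k B x) (lam R π k B y))) := by
  rw [lam_apply_of_eq_add_psi β hk hβ, hβ₀, hβ, map_add, add_assoc]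

end Reduction

theorem stmt_14_general (R : Type) [CommRing R]
    (π : R) (k : ℕ) (hk : 1 ≤ k)
    (B : Type) [AddCommGroup B] [Module (Rmod R π (k + 1)) B]
    (br0 br1 br2 : B →ₗ[Rmod R π (k + 1)] B →ₗ[Rmod R π (k + 1)] B)
    (halt0 : ∀ v, br0 v v = 0)
    (brb : Lbar R π k B →ₗ[Rmod R π (k + 1)] Lbar R π k B →ₗ[Rmod R π (k + 1)] Lbar R π k B)
    (hbrb : ∀ x y : B, lam R π k B (br0 x y) = brb (lam R π k B x) (lam R π k B y))
    (form1 form2 : Lbar R π k B →ₗ[Rmod R π (k + 1)] Lbar R π k B →ₗ[Rmod R π (k + 1)]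
      Lbar R π k B)
    (hbr1 : ∀ x y : B, br1 x y = br0 x y + psi R π k B (form1 (lam R π k B x) (lam R π k B y)))
    (hbr2 : ∀ x y : B, br2 x y = br0 x y + psi R π k B (form2 (lam R π k B x) (lam R π k B y)))
    (φ : Lbar R π k B →ₗ[Rmod R π (k + 1)] Lbar R π k B)
    (hφ : ∀ u v : Lbar R π k B,
      form2 u v - form1 u v = -(-φ (brb u v) + brb u (φ v) - brb v (φ u))) :
    ∃ Ψ : B ≃ₗ[Rmod R π (k + 1)] B,
      (∀ x : B, Ψ x = x + psi R π k B (φ (lam R π k B x))) ∧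
      (∀ x y : B, br2 (Ψ x) (Ψ y) = Ψ (br1 x y)) ∧
      (∀ x : B, modk R π k B (Ψ x) = modk R π k B x) := by
  let N := psi R π k B ∘ₗ φ ∘ₗ lam R π k B
  have hN x : N (N x) = 0 := by simp [N, lam_psi hk]
  have hbrb_alt : brb.IsAlt := fun w => by
    obtain ⟨z, rfl⟩ := exists_lam_eq w
    rw [← hbrb, halt0, map_zero]
  have hcocycle u v : form2 u v + brb u (φ v) + brb (φ u) v = form1 u v + φ (brb u v) := by
    rw [← hbrb_alt.neg v (φ u), eq_add_of_sub_eq (hφ u v)]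
    abel
  refine ⟨LinearEquiv.idAddOfSqEqZero N hN, fun x => rfl, fun x y => ?_, fun x => ?_⟩
  · simp only [LinearEquiv.idAddOfSqEqZero_apply, N, LinearMap.comp_apply]
    rw [apply_add_psi_add_psi br2 hk hbrb hbr2, add_psi_apply_of_eq_add_psi br1 hk hbrb hbr1,
      hcocycle]
  · simp only [LinearEquiv.idAddOfSqEqZero_apply, N, LinearMap.comp_apply, map_add, modk_psi,
      add_zero]

/-- If `⟨·,·⟩₂ − ⟨·,·⟩₁ = −dφ` for a linear map (1-cochain) `φ : L̄ → L̄`, then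
`Ψ = Id + ψ∘φ∘λ` is an automorphism of the `R_{k+1}`-module `B` with
`[Ψ(x),Ψ(y)]₂ = Ψ([x,y]₁)`; hence `Ψ` is a Lie algebra isomorphism from `(B,[·,·]₁)` to
`(B,[·,·]₂)` inducing the identity on `L`. -/
theorem stmt_14 (R : Type) [CommRing R] [IsDomain R] [IsDiscreteValuationRing R]
    (π : R) (hπ : Irreducible π) (k : ℕ) (hk : 1 ≤ k)
    (B : Type) [AddCommGroup B] [Module (Rmod R π (k + 1)) B]
    [Module.Free (Rmod R π (k + 1)) B] [Module.Finite (Rmod R π (k + 1)) B]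
    (brL : Lred R π k B →ₗ[Rmod R π (k + 1)] Lred R π k B →ₗ[Rmod R π (k + 1)] Lred R π k B)
    (haltL : ∀ v, brL v v = 0)
    (hjacL : ∀ x y z : Lred R π k B, brL (brL x y) z + brL (brL y z) x + brL (brL z x) y = 0)
    (br0 br1 br2 : B →ₗ[Rmod R π (k + 1)] B →ₗ[Rmod R π (k + 1)] B)
    (halt0 : ∀ v, br0 v v = 0) (halt1 : ∀ v, br1 v v = 0) (halt2 : ∀ v, br2 v v = 0)
    (hjac0 : ∀ x y z : B, br0 (br0 x y) z + br0 (br0 y z) x + br0 (br0 z x) y = 0)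
    (hjac1 : ∀ x y z : B, br1 (br1 x y) z + br1 (br1 y z) x + br1 (br1 z x) y = 0)
    (hjac2 : ∀ x y z : B, br2 (br2 x y) z + br2 (br2 y z) x + br2 (br2 z x) y = 0)
    (hlift0 : ∀ x y : B, modk R π k B (br0 x y) = brL (modk R π k B x) (modk R π k B y))
    (hlift1 : ∀ x y : B, modk R π k B (br1 x y) = brL (modk R π k B x) (modk R π k B y))
    (hlift2 : ∀ x y : B, modk R π k B (br2 x y) = brL (modk R π k B x) (modk R π k B y))
    (brb : Lbar R π k B →ₗ[Rmod R π (k + 1)] Lbar R π k B →ₗ[Rmod R π (k + 1)] Lbar R π k B)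
    (hbrb : ∀ x y : B, lam R π k B (br0 x y) = brb (lam R π k B x) (lam R π k B y))
    (form1 form2 : Lbar R π k B →ₗ[Rmod R π (k + 1)] Lbar R π k B →ₗ[Rmod R π (k + 1)]
      Lbar R π k B)
    (hform1alt : ∀ v, form1 v v = 0) (hform2alt : ∀ v, form2 v v = 0)
    (hbr1 : ∀ x y : B, br1 x y = br0 x y + psi R π k B (form1 (lam R π k B x) (lam R π k B y)))
    (hbr2 : ∀ x y : B, br2 x y = br0 x y + psi R π k B (form2 (lam R π k B x) (lam R π k B y)))
    (φ : Lbar R π k B →ₗ[Rmod R π (k + 1)] Lbar R π k B)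
    (hφ : ∀ u v : Lbar R π k B,
      form2 u v - form1 u v = -(-φ (brb u v) + brb u (φ v) - brb v (φ u))) :
    ∃ Ψ : B ≃ₗ[Rmod R π (k + 1)] B,
      (∀ x : B, Ψ x = x + psi R π k B (φ (lam R π k B x))) ∧
      (∀ x y : B, br2 (Ψ x) (Ψ y) = Ψ (br1 x y)) ∧
      (∀ x : B, modk R π k B (Ψ x) = modk R π k B x) :=
  stmt_14_general R π k hk B br0 br1 br2 halt0 brb hbrb form1 form2 hbr1 hbr2 φ hφ
end

section
/- The Killing form of the seven-dimensional Lie algebra P = sl₃(F₃)/(F₃·I) (the quotient of sl₃ over F₃ by its center) is identically zero. -/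
/-!
On `gl_n` one has `ad x ∘ ad y = (z ↦ xyz - xzy - yzx + zyx)`, and `z ↦ a z b` has trace
`tr a · tr b`, so `tr (ad x ∘ ad y) = 2n tr(xy) - 2 tr x tr y`. Since `ad x ∘ ad y` takes values
in the ideal `sl_n`, the Killing form of `sl_n` is `κ(x, y) = 2n tr(xy)`. Passing to the quotient
by the center does not change it, because `ad x ∘ ad y` kills central elements. For `n = 3` over
`F₃` the factor `2n` vanishes.
-/

open LieAlgebra

lemma Matrix.trace_mulLeft_comp_mulRight {n R : Type*} [Fintype n] [DecidableEq n] [CommRing R]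
    (a b : Matrix n n R) :
    LinearMap.trace R _ (LinearMap.mulLeft R a ∘ₗ LinearMap.mulRight R b) = trace a * trace b := by
  rw [LinearMap.trace_eq_matrix_trace R (stdBasis R n n), trace, trace, trace,
    Finset.sum_mul_sum, ← Finset.univ_product_univ, Finset.sum_product]
  refine Finset.sum_congr rfl fun i _ => Finset.sum_congr rfl fun j _ => ?_
  have repr_apply (M : Matrix n n R) : (stdBasis R n n).repr M (i, j) = M i j := by
    simp [stdBasis]
  rw [diag_apply, LinearMap.toMatrix_apply, stdBasis_eq_single, repr_apply]
  simp only [LinearMap.comp_apply, LinearMap.mulRight_apply, LinearMap.mulLeft_apply]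
  rw [← Matrix.mul_assoc, mul_apply, Finset.sum_eq_single j (fun k _ hk => by simp [hk]) (by simp)]
  simp

lemma LinearMap.trace_eq_of_comp_mkQ_eq {K M : Type*} [Field K] [AddCommGroup M] [Module K M]
    [FiniteDimensional K M] (p : Submodule K M) {f : M →ₗ[K] M} {g : (M ⧸ p) →ₗ[K] M ⧸ p}
    (hf : p ≤ ker f) (hfg : g ∘ₗ p.mkQ = p.mkQ ∘ₗ f) :
    trace K _ g = trace K M f := by
  have hg : g = p.mkQ ∘ₗ p.liftQ f hf :=
    p.linearMap_qext (by rw [hfg, comp_assoc, Submodule.liftQ_mkQ])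
  rw [hg, trace_comp_comm', Submodule.liftQ_mkQ]

lemma LieAlgebra.killingForm_quotient_mk_mk {K L : Type*} [Field K] [LieRing L] [LieAlgebra K L]
    [FiniteDimensional K L] (I : LieIdeal K L) (hI : I ≤ center K L) (x y : L) :
    killingForm K (L ⧸ I) (LieSubmodule.Quotient.mk' I x) (LieSubmodule.Quotient.mk' I y) =
      killingForm K L x y := by
  rw [killingForm_apply_apply, killingForm_apply_apply]
  refine LinearMap.trace_eq_of_comp_mkQ_eq I.toSubmodule (fun z hz => ?_) rfl
  have hyz : ⁅y, z⁆ = 0 := (LieModule.mem_maxTrivSubmodule K L L z).1 (hI hz) y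
  simp [hyz]

section

attribute [local instance] LieRing.ofAssociativeRing

lemma Matrix.trace_ad_comp_ad {n R : Type*} [Fintype n] [DecidableEq n] [CommRing R]
    (x y : Matrix n n R) :
    LinearMap.trace R _ (ad R _ x ∘ₗ ad R _ y) =
      2 * Fintype.card n * trace (x * y) - 2 * trace x * trace y := by
  have hdecomp : ad R _ x ∘ₗ ad R _ y =
      LinearMap.mulLeft R (x * y) ∘ₗ LinearMap.mulRight R 1
        - LinearMap.mulLeft R x ∘ₗ LinearMap.mulRight R y
        - LinearMap.mulLeft R y ∘ₗ LinearMap.mulRight R x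
        + LinearMap.mulLeft R 1 ∘ₗ LinearMap.mulRight R (y * x) := by
    ext1 z
    simp only [LinearMap.comp_apply, ad_apply, Ring.lie_def, LinearMap.add_apply,
      LinearMap.sub_apply, LinearMap.mulLeft_apply, LinearMap.mulRight_apply]
    noncomm_ring
  simp only [hdecomp, map_add, map_sub, trace_mulLeft_comp_mulRight, trace_one, trace_mul_comm y x]
  ring

lemma LieAlgebra.SpecialLinear.killingForm_sl_apply {n R : Type*} [Fintype n] [DecidableEq n]
    [CommRing R] [IsDomain R] [IsPrincipalIdealRing R] (x y : sl n R) :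
    killingForm R (sl n R) x y =
      2 * Fintype.card n * Matrix.trace ((x : Matrix n n R) * (y : Matrix n n R)) := by
  let f := ad R _ (x : Matrix n n R) ∘ₗ ad R _ (y : Matrix n n R)
  have hf (z : Matrix n n R) : f z ∈ (sl n R).toSubmodule :=
    LinearMap.mem_ker.2 (matrix_trace_commutator_zero _ _ _ _)
  have hres : ad R (sl n R) x ∘ₗ ad R (sl n R) y = f.restrict (fun z _ => hf z) := rfl
  rw [killingForm_apply_apply, hres]
  refine (f.trace_restrict_eq_of_forall_mem _ hf).trans ?_
  rw [Matrix.trace_ad_comp_ad, show Matrix.trace (x : Matrix n n R) = 0 from x.2]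
  ring

end

/-- The Killing form of the seven-dimensional Lie algebra
`P = sl₃(F₃)/(F₃·I)` — the quotient of the Lie algebra of trace-zero 3×3 matrices over
`F₃` by its one-dimensional center of scalar matrices — is identically zero. -/
theorem stmt_19 :
    killingForm (ZMod 3)
      (LieAlgebra.SpecialLinear.sl (Fin 3) (ZMod 3) ⧸
        LieAlgebra.center (ZMod 3) (LieAlgebra.SpecialLinear.sl (Fin 3) (ZMod 3))) = 0 := by
  ext a b
  obtain ⟨x, rfl⟩ := LieSubmodule.Quotient.surjective_mk' _ a
  obtain ⟨y, rfl⟩ := LieSubmodule.Quotient.surjective_mk' _ b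
  have h2n : (2 * Fintype.card (Fin 3) : ZMod 3) = 0 := by decide
  rw [killingForm_quotient_mk_mk _ le_rfl, SpecialLinear.killingForm_sl_apply, h2n, zero_mul,
    LinearMap.zero_apply, LinearMap.zero_apply]
end
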